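/- arXiv:2411.05289 — 4 statements merged into one kernel-verified Lean document; each statement's English description precedes it below -/
import Mathlib

section
/- In single-draft rejection sampling, accepting a drafted token x ~ q with probability min(1, p(x)/q(x)), and upon rejection sampling from the normalized residual distribution norm(max(p - q, 0)), produces a token whose distribution is exactly p. -/
theorem single_draft_rejection_sampling_exact {V : Type*} [Fintype V] (p q : V → ℝ)
    (hp0 : ∀ x, 0 ≤ p x) (hqpos : ∀ x, 0 < q x)
    (hp1 : ∑ x, p x = 1) (hq1 : ∑ x, q x = 1)
    (hα : ∑ y, min (p y) (q y) < 1) :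
    ∀ x, q x * min 1 (p x / q x) +
      (1 - ∑ y, min (p y) (q y)) *
        (max (p x - q x) 0 / (1 - ∑ y, min (p y) (q y))) = p x := by
  intro x
  have hq := hqpos x
  have hne : (1 - ∑ y, min (p y) (q y)) ≠ 0 := by linarith
  rw [mul_div_cancel₀ _ hne]
  have h1 : q x * min 1 (p x / q x) = min (q x) (p x) := by
    rw [mul_min_of_nonneg _ _ hq.le, mul_one, mul_div_cancel₀ _ hq.ne']
  rw [h1]
  rcases le_total (p x) (q x) with h | h
  · rw [min_eq_right h, max_eq_right (by linarith)]; ring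
  · rw [min_eq_left h, max_eq_left (by linarith)]; ring
end

section
/- SpecHub's full output distribution equals the target distribution p: for every token x ∈ V, the probability that SpecHub emits x (accepted in draft one, draft two, or sampled from the final residual) equals p(x). -/
theorem spechub_output_distribution_correct {V : Type*} [Fintype V] [DecidableEq V]
    (p q : V → ℝ) (a : V)
    (hp0 : ∀ x, 0 ≤ p x) (hq0 : ∀ x, 0 ≤ q x)
    (hp1 : ∑ x, p x = 1) (hq1 : ∑ x, q x = 1)
    (ha0 : 0 < q a) (ha1 : q a < 1) :
    (∀ x, x ≠ a →
      min (p x) (q x) +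
        min (p x - min (p x) (q x)) (q a * q x / (1 - q a)) +
        max (p x - q x - q a * q x / (1 - q a)) 0 = p x) ∧
    min (p a)
      (∑ x ∈ Finset.univ.erase a, max (q a * q x / (1 - q a) + q x - p x) 0) = p a := by
  have h1a : (0:ℝ) < 1 - q a := by linarith
  constructor
  · intro x hx
    have hQ : 0 ≤ q a * q x / (1 - q a) :=
      div_nonneg (mul_nonneg ha0.le (hq0 x)) h1a.le
    rcases le_total (p x) (q x) with h | h
    · rw [min_eq_left h]
      have : min (p x - p x) (q a * q x / (1 - q a)) = 0 := by
        rw [sub_self, min_eq_left hQ]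
      rw [this, max_eq_right (by linarith)]
      ring
    · rw [min_eq_right h]
      rcases le_total (p x - q x) (q a * q x / (1 - q a)) with h2 | h2
      · rw [min_eq_left h2, max_eq_right (by linarith)]; ring
      · rw [min_eq_right h2, max_eq_left (by linarith)]; ring
  · have key : p a ≤ ∑ x ∈ Finset.univ.erase a, max (q a * q x / (1 - q a) + q x - p x) 0 := by
      have hle : ∑ x ∈ Finset.univ.erase a, (q a * q x / (1 - q a) + q x - p x) ≤
          ∑ x ∈ Finset.univ.erase a, max (q a * q x / (1 - q a) + q x - p x) 0 :=
        Finset.sum_le_sum fun x _ => le_max_left _ _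
      have hq' : ∑ x ∈ Finset.univ.erase a, q x = 1 - q a := by
        have := Finset.sum_erase_add Finset.univ q (Finset.mem_univ a)
        rw [hq1] at this; linarith
      have hp' : ∑ x ∈ Finset.univ.erase a, p x = 1 - p a := by
        have := Finset.sum_erase_add Finset.univ p (Finset.mem_univ a)
        rw [hp1] at this; linarith
      have hsum : ∑ x ∈ Finset.univ.erase a, (q a * q x / (1 - q a) + q x - p x) = p a := by
        rw [Finset.sum_sub_distrib, Finset.sum_add_distrib, hq', hp']
        have : ∑ x ∈ Finset.univ.erase a, q a * q x / (1 - q a)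
            = (q a / (1 - q a)) * ∑ x ∈ Finset.univ.erase a, q x := by
          rw [Finset.mul_sum]; congr 1; ext x; ring
        rw [this, hq']
        field_simp
        ring
      linarith
    exact min_eq_left key
end

section
/- The optimal value of the simplified LP equals the optimal transport cost of the OTM problem: min over couplings π of p and Q of E_π[∏ᵢ 1{y ≠ xᵢ}] equals 1 minus the maximum of ∑_{x₁:k} ∑ᵢ π(x₁:k, xᵢ) subject to the simplified LP constraints. -/
theorem simplified_lp_equals_otm {V : Type*} [Fintype V] [DecidableEq V] [Nonempty V]
    {k : ℕ} (Q : (Fin k → V) → ℝ) (p : V → ℝ)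
    (hQ0 : ∀ x, 0 ≤ Q x) (hQ1 : ∑ x, Q x = 1)
    (hp0 : ∀ y, 0 ≤ p y) (hp1 : ∑ y, p y = 1) :
    sInf {c : ℝ | ∃ π : (Fin k → V) → V → ℝ,
        (∀ x y, 0 ≤ π x y) ∧
        (∀ x, ∑ y, π x y = Q x) ∧
        (∀ y, ∑ x, π x y = p y) ∧
        c = ∑ x, ∑ y, π x y * ∏ i, (if y = x i then (0 : ℝ) else 1)} =
      1 - sSup {s : ℝ | ∃ π : (Fin k → V) → Fin k → ℝ,
        (∀ x i, 0 ≤ π x i) ∧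
        (∀ x, ∑ i, π x i ≤ Q x) ∧
        (∀ y, ∑ i, ∑ x ∈ Finset.univ.filter (fun x : Fin k → V => x i = y), π x i ≤ p y) ∧
        s = ∑ x, ∑ i, π x i} := by
  classical
  set C : Set ℝ := {c : ℝ | ∃ π : (Fin k → V) → V → ℝ,
        (∀ x y, 0 ≤ π x y) ∧
        (∀ x, ∑ y, π x y = Q x) ∧
        (∀ y, ∑ x, π x y = p y) ∧
        c = ∑ x, ∑ y, π x y * ∏ i, (if y = x i then (0 : ℝ) else 1)} with hCdef
  set S : Set ℝ := {s : ℝ | ∃ π : (Fin k → V) → Fin k → ℝ,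
        (∀ x i, 0 ≤ π x i) ∧
        (∀ x, ∑ i, π x i ≤ Q x) ∧
        (∀ y, ∑ i, ∑ x ∈ Finset.univ.filter (fun x : Fin k → V => x i = y), π x i ≤ p y) ∧
        s = ∑ x, ∑ i, π x i} with hSdef
  -- the indicator product
  have prodeq : ∀ (x : Fin k → V) (y : V),
      (∏ i, (if y = x i then (0 : ℝ) else 1)) = if ∃ i, x i = y then 0 else 1 := by
    intro x y
    by_cases h : ∃ i, x i = y
    · rw [if_pos h]
      obtain ⟨i, hi⟩ := h
      exact Finset.prod_eq_zero (Finset.mem_univ i) (by simp [hi.symm])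
    · rw [if_neg h]
      apply Finset.prod_eq_one
      intro i _
      rw [if_neg fun he => h ⟨i, he.symm⟩]
  have prodnn : ∀ (x : Fin k → V) (y : V),
      (0 : ℝ) ≤ ∏ i, (if y = x i then (0 : ℝ) else 1) := by
    intro x y; rw [prodeq]; split <;> norm_num
  have prodle1 : ∀ (x : Fin k → V) (y : V),
      (∏ i, (if y = x i then (0 : ℝ) else 1)) ≤ 1 := by
    intro x y; rw [prodeq]; split <;> norm_num
  -- swapping the double sums in the column constraint
  have hswap : ∀ (f : (Fin k → V) → Fin k → ℝ) (y : V),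
      (∑ i, ∑ x ∈ Finset.univ.filter (fun x : Fin k → V => x i = y), f x i)
        = ∑ x, ∑ i ∈ Finset.univ.filter (fun i : Fin k => x i = y), f x i := by
    intro f y
    simp only [Finset.sum_filter]
    exact Finset.sum_comm
  -- Nonemptiness / boundedness
  have hCne : C.Nonempty := by
    refine ⟨_, fun x y => Q x * p y, fun x y => mul_nonneg (hQ0 x) (hp0 y), ?_, ?_, rfl⟩
    · intro x; rw [← Finset.mul_sum, hp1, mul_one]
    · intro y; rw [← Finset.sum_mul, hQ1, one_mul]
  have hCbd : BddBelow C := by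
    refine ⟨0, fun c hc => ?_⟩
    obtain ⟨π, h0, -, -, hc⟩ := hc
    rw [hc]
    apply Finset.sum_nonneg; intro x _
    apply Finset.sum_nonneg; intro y _
    exact mul_nonneg (h0 x y) (prodnn x y)
  have hS0 : (0 : ℝ) ∈ S := by
    refine ⟨fun _ _ => 0, fun _ _ => le_rfl, ?_, ?_, by simp⟩
    · intro x; simpa using hQ0 x
    · intro y; simpa using hp0 y
  have hSbd : BddAbove S := by
    refine ⟨1, fun s hs => ?_⟩
    obtain ⟨π, h0, hrow, -, hs⟩ := hs
    rw [hs, ← hQ1]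
    exact Finset.sum_le_sum fun x _ => hrow x
  -- Direction A: from a coupling to a simplified-LP solution
  have dirA : ∀ c ∈ C, (1 - c) ∈ S := by
    intro c hc
    obtain ⟨π, h0, hrow, hcol, hc⟩ := hc
    set π' : (Fin k → V) → Fin k → ℝ := fun x i =>
      π x (x i) / ((Finset.univ.filter (fun j : Fin k => x j = x i)).card : ℝ) with hπ'def
    have fib : ∀ (x : Fin k → V) (y : V),
        (∑ i ∈ Finset.univ.filter (fun i : Fin k => x i = y), π' x i)
          = if ∃ i, x i = y then π x y else 0 := by
      intro x y
      by_cases h : ∃ i, x i = y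
      · rw [if_pos h]
        obtain ⟨i₀, hi₀⟩ := h
        have hcard : (0 : ℝ) < ((Finset.univ.filter (fun j : Fin k => x j = y)).card : ℝ) := by
          have : i₀ ∈ Finset.univ.filter (fun j : Fin k => x j = y) := by simp [hi₀]
          exact_mod_cast Finset.card_pos.mpr ⟨i₀, this⟩
        have heach : ∀ i ∈ Finset.univ.filter (fun i : Fin k => x i = y),
            π' x i = π x y / ((Finset.univ.filter (fun j : Fin k => x j = y)).card : ℝ) := by
          intro i hi
          simp only [Finset.mem_filter] at hi
          simp [hπ'def, hi.2]
        rw [Finset.sum_congr rfl heach, Finset.sum_const, nsmul_eq_mul]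
        field_simp
      · rw [if_neg h]
        apply Finset.sum_eq_zero
        intro i hi
        simp only [Finset.mem_filter] at hi
        exact absurd ⟨i, hi.2⟩ h
    have krow : ∀ x : Fin k → V,
        (∑ i, π' x i) = ∑ y, (if ∃ i, x i = y then π x y else 0) := by
      intro x
      rw [← Finset.sum_fiberwise Finset.univ (fun i => x i) (fun i => π' x i)]
      exact Finset.sum_congr rfl fun y _ => fib x y
    refine ⟨π', ?_, ?_, ?_, ?_⟩
    · intro x i
      exact div_nonneg (h0 x (x i)) (Nat.cast_nonneg _)
    · intro x
      rw [krow, ← hrow x]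
      apply Finset.sum_le_sum
      intro y _
      split
      · exact le_rfl
      · exact h0 x y
    · intro y
      rw [hswap, ← hcol y]
      apply Finset.sum_le_sum
      intro x _
      rw [fib]
      split
      · exact le_rfl
      · exact h0 x y
    · have hsplit : ∀ (x : Fin k → V) (y : V),
          (if ∃ i, x i = y then π x y else 0)
            + π x y * ∏ i, (if y = x i then (0 : ℝ) else 1) = π x y := by
        intro x y
        rw [prodeq]
        by_cases h : ∃ i, x i = y <;> simp [h]
      have htot : (∑ x, ∑ y, (if ∃ i, x i = y then π x y else 0))
          + ∑ x, ∑ y, π x y * ∏ i, (if y = x i then (0 : ℝ) else 1) = 1 := by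
        rw [← Finset.sum_add_distrib]
        calc (∑ x, ((∑ y, (if ∃ i, x i = y then π x y else 0))
                + ∑ y, π x y * ∏ i, (if y = x i then (0 : ℝ) else 1)))
            = ∑ x, ∑ y, π x y := by
              apply Finset.sum_congr rfl
              intro x _
              rw [← Finset.sum_add_distrib]
              exact Finset.sum_congr rfl fun y _ => hsplit x y
          _ = ∑ x, Q x := Finset.sum_congr rfl fun x _ => hrow x
          _ = 1 := hQ1
      have : (∑ x, ∑ i, π' x i) = ∑ x, ∑ y, (if ∃ i, x i = y then π x y else 0) :=
        Finset.sum_congr rfl fun x _ => krow x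
      rw [this]
      rw [hc] at *
      linarith
  -- Direction B: from a simplified-LP solution to a coupling
  have dirB : ∀ s ∈ S, ∃ c ∈ C, c ≤ 1 - s := by
    intro s hs
    obtain ⟨π', h0, hrow, hcol, hseq⟩ := hs
    set r : (Fin k → V) → ℝ := fun x => ∑ i, π' x i with hrdef
    set cc : V → ℝ := fun y => ∑ x, ∑ i ∈ Finset.univ.filter (fun i : Fin k => x i = y), π' x i
      with hccdef
    have hcc_le : ∀ y, cc y ≤ p y := by
      intro y
      show (∑ x, ∑ i ∈ Finset.univ.filter (fun i : Fin k => x i = y), π' x i) ≤ p y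
      rw [← hswap]
      exact hcol y
    have hr_le : ∀ x, r x ≤ Q x := hrow
    have hQr : ∀ x, 0 ≤ Q x - r x := fun x => by linarith [hr_le x]
    have hpc : ∀ y, 0 ≤ p y - cc y := fun y => by linarith [hcc_le y]
    have hsumr : ∑ x, r x = s := hseq.symm
    have hsumcc : ∑ y, cc y = s := by
      rw [hccdef]
      simp only
      rw [Finset.sum_comm]
      calc (∑ x, ∑ y, ∑ i ∈ Finset.univ.filter (fun i : Fin k => x i = y), π' x i)
          = ∑ x, ∑ i, π' x i := by
            apply Finset.sum_congr rfl
            intro x _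
            exact Finset.sum_fiberwise Finset.univ (fun i => x i) (fun i => π' x i)
        _ = s := hseq.symm
    have hsQ : ∑ x, (Q x - r x) = 1 - s := by
      rw [Finset.sum_sub_distrib, hQ1, hsumr]
    have hsp : ∑ y, (p y - cc y) = 1 - s := by
      rw [Finset.sum_sub_distrib, hp1, hsumcc]
    have hs1 : s ≤ 1 := by
      rw [← hQ1, hseq]
      exact Finset.sum_le_sum fun x _ => hrow x
    -- if s = 1, all residuals vanish
    have hres1 : s = 1 → ∀ x, Q x - r x = 0 := by
      intro h1 x
      have : ∑ x, (Q x - r x) = 0 := by rw [hsQ, h1]; ring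
      exact (Finset.sum_eq_zero_iff_of_nonneg fun x _ => hQr x).mp this x (Finset.mem_univ x)
    have hres2 : s = 1 → ∀ y, p y - cc y = 0 := by
      intro h1 y
      have : ∑ y, (p y - cc y) = 0 := by rw [hsp, h1]; ring
      exact (Finset.sum_eq_zero_iff_of_nonneg fun y _ => hpc y).mp this y (Finset.mem_univ y)
    set π : (Fin k → V) → V → ℝ := fun x y =>
      (∑ i ∈ Finset.univ.filter (fun i : Fin k => x i = y), π' x i)
        + (Q x - r x) / (1 - s) * (p y - cc y) with hπdef
    have hπ0 : ∀ x y, 0 ≤ π x y := by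
      intro x y
      apply add_nonneg
      · exact Finset.sum_nonneg fun i _ => h0 x i
      · exact mul_nonneg (div_nonneg (hQr x) (by linarith)) (hpc y)
    have hπrow : ∀ x, ∑ y, π x y = Q x := by
      intro x
      rw [hπdef]
      simp only
      rw [Finset.sum_add_distrib, Finset.sum_fiberwise Finset.univ (fun i => x i)
        (fun i => π' x i), ← Finset.mul_sum, hsp]
      rcases eq_or_ne s 1 with h1 | h1
      · rw [hres1 h1 x]
        simp [hrdef]
        linarith [hres1 h1 x]
      · rw [div_mul_cancel₀ _ (by intro h; apply h1; linarith : (1 : ℝ) - s ≠ 0)]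
        ring
    have hπcol : ∀ y, ∑ x, π x y = p y := by
      intro y
      rw [hπdef]
      simp only
      rw [Finset.sum_add_distrib, ← Finset.sum_mul, ← Finset.sum_div, hsQ]
      have hccy : (∑ x, ∑ i ∈ Finset.univ.filter (fun i : Fin k => x i = y), π' x i) = cc y :=
        rfl
      rw [hccy]
      rcases eq_or_ne s 1 with h1 | h1
      · rw [hres2 h1 y]
        have := hres2 h1 y
        simp only [mul_zero, add_zero]
        linarith
      · rw [div_self (by intro h; apply h1; linarith : (1 : ℝ) - s ≠ 0), one_mul]
        ring
    have hπ0cost : ∀ (x : Fin k → V) (y : V),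
        (∑ i ∈ Finset.univ.filter (fun i : Fin k => x i = y), π' x i)
          * ∏ i, (if y = x i then (0 : ℝ) else 1) = 0 := by
      intro x y
      rw [prodeq]
      by_cases h : ∃ i, x i = y
      · rw [if_pos h, mul_zero]
      · rw [if_neg h, mul_one]
        apply Finset.sum_eq_zero
        intro i hi
        simp only [Finset.mem_filter] at hi
        exact absurd ⟨i, hi.2⟩ h
    refine ⟨∑ x, ∑ y, π x y * ∏ i, (if y = x i then (0 : ℝ) else 1),
      ⟨π, hπ0, hπrow, hπcol, rfl⟩, ?_⟩
    have hstep : (∑ x, ∑ y, π x y * ∏ i, (if y = x i then (0 : ℝ) else 1))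
        ≤ ∑ x, ∑ y, (Q x - r x) / (1 - s) * (p y - cc y) := by
      apply Finset.sum_le_sum; intro x _
      apply Finset.sum_le_sum; intro y _
      rw [hπdef]
      simp only
      rw [add_mul, hπ0cost, zero_add]
      calc (Q x - r x) / (1 - s) * (p y - cc y) * ∏ i, (if y = x i then (0 : ℝ) else 1)
          ≤ (Q x - r x) / (1 - s) * (p y - cc y) * 1 := by
            apply mul_le_mul_of_nonneg_left (prodle1 x y)
            exact mul_nonneg (div_nonneg (hQr x) (by linarith)) (hpc y)
        _ = (Q x - r x) / (1 - s) * (p y - cc y) := mul_one _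
    have hval : (∑ x, ∑ y, (Q x - r x) / (1 - s) * (p y - cc y)) ≤ 1 - s := by
      have hA : (∑ x, (Q x - r x) / (1 - s)) = (1 - s) / (1 - s) := by
        rw [← Finset.sum_div, hsQ]
      have this1 : (∑ x, ∑ y, (Q x - r x) / (1 - s) * (p y - cc y))
          = (1 - s) / (1 - s) * (1 - s) := by
        calc (∑ x, ∑ y, (Q x - r x) / (1 - s) * (p y - cc y))
            = ∑ x, (Q x - r x) / (1 - s) * ∑ y, (p y - cc y) :=
              Finset.sum_congr rfl fun x _ => (Finset.mul_sum _ _ _).symm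
          _ = ∑ x, (Q x - r x) / (1 - s) * (1 - s) := by rw [hsp]
          _ = (∑ x, (Q x - r x) / (1 - s)) * (1 - s) := (Finset.sum_mul _ _ _).symm
          _ = (1 - s) / (1 - s) * (1 - s) := by rw [hA]
      rw [this1]
      rcases eq_or_ne s 1 with h1 | h1
      · simp [h1]
      · rw [div_self (by intro h; apply h1; linarith : (1 : ℝ) - s ≠ 0), one_mul]
    linarith
  -- Assemble
  apply le_antisymm
  · have h1 : sSup S ≤ 1 - sInf C := by
      apply csSup_le ⟨0, hS0⟩
      intro s hs
      obtain ⟨c, hcC, hcle⟩ := dirB s hs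
      have := csInf_le hCbd hcC
      linarith
    linarith
  · apply le_csInf hCne
    intro c hc
    have := le_csSup hSbd (dirA c hc)
    linarith
end

section
/- For k = 2 and independent drafts Q = q ⊗ q, the optimal acceptance rate of any coupling between q ⊗ q and p is at most ∑_y min(p(y), 1 - (1 - q(y))²). -/
theorem two_draft_independent_acceptance_bound {V : Type*} [Fintype V] [DecidableEq V]
    (q p : V → ℝ)
    (hq0 : ∀ x, 0 ≤ q x) (hq1 : ∑ x, q x = 1)
    (hp0 : ∀ y, 0 ≤ p y) (hp1 : ∑ y, p y = 1)
    (π : V → V → V → ℝ)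
    (hπ0 : ∀ x₁ x₂ y, 0 ≤ π x₁ x₂ y)
    (hπQ : ∀ x₁ x₂, ∑ y, π x₁ x₂ y = q x₁ * q x₂)
    (hπp : ∀ y, ∑ x₁, ∑ x₂, π x₁ x₂ y = p y) :
    ∑ x₁, ∑ x₂, ∑ y, π x₁ x₂ y * (if y = x₁ ∨ y = x₂ then (1 : ℝ) else 0) ≤
      ∑ y, min (p y) (1 - (1 - q y) ^ 2) := by
  have hrw : ∑ x₁, ∑ x₂, ∑ y, π x₁ x₂ y * (if y = x₁ ∨ y = x₂ then (1 : ℝ) else 0)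
      = ∑ y, ∑ x₁, ∑ x₂, π x₁ x₂ y * (if y = x₁ ∨ y = x₂ then (1 : ℝ) else 0) := by
    rw [show (∑ x₁, ∑ x₂, ∑ y, π x₁ x₂ y * (if y = x₁ ∨ y = x₂ then (1 : ℝ) else 0))
        = ∑ x₁, ∑ y, ∑ x₂, π x₁ x₂ y * (if y = x₁ ∨ y = x₂ then (1 : ℝ) else 0) from
      Finset.sum_congr rfl fun _ _ => Finset.sum_comm]
    exact Finset.sum_comm
  rw [hrw]
  apply Finset.sum_le_sum
  intro y _
  apply le_min
  · -- bounded by p y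
    rw [← hπp y]
    apply Finset.sum_le_sum; intro x₁ _
    apply Finset.sum_le_sum; intro x₂ _
    split_ifs <;> simp [hπ0 x₁ x₂ y]
  · -- bounded by 1 - (1 - q y)^2
    have step1 : ∑ x₁, ∑ x₂, π x₁ x₂ y * (if y = x₁ ∨ y = x₂ then (1 : ℝ) else 0)
        ≤ ∑ x₁, ∑ x₂, q x₁ * q x₂ * (if y = x₁ ∨ y = x₂ then (1 : ℝ) else 0) := by
      apply Finset.sum_le_sum; intro x₁ _
      apply Finset.sum_le_sum; intro x₂ _
      have hle : π x₁ x₂ y ≤ q x₁ * q x₂ := by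
        rw [← hπQ x₁ x₂]
        exact Finset.single_le_sum (fun y' _ => hπ0 x₁ x₂ y') (Finset.mem_univ y)
      split_ifs <;> simp [hle, hπ0 x₁ x₂ y]
    refine step1.trans (le_of_eq ?_)
    have key : ∀ x₁ x₂ : V, q x₁ * q x₂ * (if y = x₁ ∨ y = x₂ then (1 : ℝ) else 0)
        = q x₁ * q x₂ - (if x₁ = y then 0 else q x₁) * (if x₂ = y then 0 else q x₂) := by
      intro x₁ x₂
      by_cases h1 : x₁ = y
      · subst h1
        simp [true_or]
      · by_cases h2 : x₂ = y
        · subst h2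
          simp [h1, or_true]
        · have : ¬(y = x₁ ∨ y = x₂) := by
            rintro (rfl | rfl) <;> simp_all
          simp [h1, h2, this]
    have hsum : ∀ x : V, True := fun _ => trivial
    simp only [key, Finset.sum_sub_distrib]
    have h1 : ∑ x₁ : V, ∑ x₂ : V, q x₁ * q x₂ = 1 := by
      rw [← Finset.sum_mul_sum, hq1]; ring
    have h2 : (∑ x : V, if x = y then (0:ℝ) else q x) = 1 - q y := by
      have : ∀ x : V, (if x = y then (0:ℝ) else q x) = q x - (if x = y then q x else 0) := by
        intro x; split_ifs <;> ring
      simp only [this, Finset.sum_sub_distrib, hq1, Finset.sum_ite_eq' Finset.univ y q,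
        Finset.mem_univ, if_true]
    have h3 : ∑ x₁ : V, ∑ x₂ : V, (if x₁ = y then (0:ℝ) else q x₁) * (if x₂ = y then 0 else q x₂)
        = (1 - q y) * (1 - q y) := by
      rw [← Finset.sum_mul_sum, h2]
    rw [h1, h3]; ring
end
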